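/- For p in the open unit ball of ℝ^d and q in the open unit ball with p ≠ q, the argument (1 - ⟨p,q⟩)/√((1-‖p‖²)(1-‖q‖²)) of arccosh in the Klein distance is always ≥ 1, with equality if and only if p = q. -/

import Mathlib

/-!
Everything rests on the identity
`(1 - ⟪p, q⟫)² = (1 - ‖p‖²)(1 - ‖q‖²) + (1 - ‖p‖²)‖p - q‖² + ⟪p, q - p⟫²`,
valid in any real inner product space. Inside the unit ball the last two terms are nonnegative
and vanish only for `p = q`, while `1 - ⟪p, q⟫ > 0` by Cauchy–Schwarz; taking square roots
gives the claim.
-/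

open scoped RealInnerProductSpace

theorem one_sub_norm_sq_pos {E : Type*} [SeminormedAddGroup E] {p : E} (hp : ‖p‖ < 1) :
    0 < 1 - ‖p‖ ^ 2 :=
  sub_pos.mpr (pow_lt_one₀ (norm_nonneg p) hp two_ne_zero)

section InnerProductSpace

variable {E : Type*} [NormedAddCommGroup E] [InnerProductSpace ℝ E]

noncomputable def kleinDefect (p q : E) : ℝ :=
  (1 - ‖p‖ ^ 2) * ‖p - q‖ ^ 2 + ⟪p, q - p⟫ ^ 2

theorem sq_one_sub_real_inner_eq (p q : E) :
    (1 - ⟪p, q⟫) ^ 2 = (1 - ‖p‖ ^ 2) * (1 - ‖q‖ ^ 2) + kleinDefect p q := by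
  rw [kleinDefect, norm_sub_sq_real, inner_sub_right, real_inner_self_eq_norm_sq]
  ring

theorem real_inner_lt_one_of_norm_lt_one {p q : E} (hp : ‖p‖ < 1) (hq : ‖q‖ < 1) :
    ⟪p, q⟫ < 1 :=
  (real_inner_le_norm p q).trans_lt
    (mul_lt_one_of_nonneg_of_lt_one_left (norm_nonneg p) hp hq.le)

theorem kleinDefect_nonneg {p : E} (hp : ‖p‖ < 1) (q : E) : 0 ≤ kleinDefect p q := by
  have := one_sub_norm_sq_pos hp
  unfold kleinDefect
  positivity

theorem kleinDefect_eq_zero_iff {p : E} (hp : ‖p‖ < 1) (q : E) :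
    kleinDefect p q = 0 ↔ p = q := by
  have hp' := one_sub_norm_sq_pos hp
  constructor
  · intro h
    rw [kleinDefect] at h
    have hdist : (1 - ‖p‖ ^ 2) * ‖p - q‖ ^ 2 = 0 :=
      ((add_eq_zero_iff_of_nonneg (by positivity) (sq_nonneg _)).mp h).1
    simpa [hp'.ne', sub_eq_zero] using hdist
  · rintro rfl
    simp [kleinDefect]

end InnerProductSpace

theorem one_le_div_sqrt_and_div_sqrt_eq_one_iff {x A D : ℝ} (hA : 0 < A) (hx : 0 ≤ x)
    (hD : 0 ≤ D) (h : x ^ 2 = A + D) : 1 ≤ x / √A ∧ (x / √A = 1 ↔ D = 0) := by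
  have hsqrt : 0 < √A := Real.sqrt_pos.mpr hA
  refine ⟨?_, ?_⟩
  · rw [one_le_div hsqrt, Real.sqrt_le_left hx]
    linarith
  · rw [div_eq_one_iff_eq hsqrt.ne', eq_comm, Real.sqrt_eq_iff_eq_sq hA.le hx]
    constructor <;> intro <;> linarith

/-- The argument of `arccosh` in the Klein distance is always `≥ 1`,
with equality iff the two points coincide. -/
theorem klein_arg_ge_one {d : ℕ} (p q : EuclideanSpace ℝ (Fin d))
    (hp : ‖p‖ < 1) (hq : ‖q‖ < 1) :
    1 ≤ (1 - ⟪p, q⟫) / Real.sqrt ((1 - ‖p‖ ^ 2) * (1 - ‖q‖ ^ 2)) ∧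
      ((1 - ⟪p, q⟫) / Real.sqrt ((1 - ‖p‖ ^ 2) * (1 - ‖q‖ ^ 2)) = 1 ↔ p = q) := by
  rw [← kleinDefect_eq_zero_iff hp q]
  exact one_le_div_sqrt_and_div_sqrt_eq_one_iff
    (mul_pos (one_sub_norm_sq_pos hp) (one_sub_norm_sq_pos hq))
    (sub_nonneg.mpr (real_inner_lt_one_of_norm_lt_one hp hq).le)
    (kleinDefect_nonneg hp q) (sq_one_sub_real_inner_eq p q)
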